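/- With α_t = (H+1)/(H+t) and α_t^i = α_i·∏_{j=i+1}^t (1-α_j), for every t ≥ 1 it holds that 1/√t ≤ ∑_{i=1}^t α_t^i/√i ≤ 2/√t. -/

import Mathlib

open Finset

noncomputable def alphaStep (H t : ℕ) : ℝ := (H + 1) / (H + t)

noncomputable def alphaWeight (H i t : ℕ) : ℝ :=
  alphaStep H i * ∏ j ∈ Finset.Icc (i + 1) t, (1 - alphaStep H j)

lemma alphaStep_nonneg (H t : ℕ) : 0 ≤ alphaStep H t := by
  unfold alphaStep; positivity

lemma alphaStep_le_one (H t : ℕ) (hH : 1 ≤ H) (ht : 1 ≤ t) : alphaStep H t ≤ 1 := by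
  unfold alphaStep
  rw [div_le_one (by positivity)]
  have : (1:ℝ) ≤ t := by exact_mod_cast ht
  linarith

lemma alphaWeight_nonneg (H i t : ℕ) (hH : 1 ≤ H) : 0 ≤ alphaWeight H i t := by
  unfold alphaWeight
  apply mul_nonneg (alphaStep_nonneg H i)
  apply Finset.prod_nonneg
  intro j hj
  simp only [Finset.mem_Icc] at hj
  have : alphaStep H j ≤ 1 := alphaStep_le_one H j hH (by omega)
  linarith

lemma sum_weight_succ (H t : ℕ) (f : ℕ → ℝ) :
    ∑ i ∈ Finset.Icc 1 (t+1), alphaWeight H i (t+1) * f i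
      = alphaStep H (t+1) * f (t+1)
        + (1 - alphaStep H (t+1)) * ∑ i ∈ Finset.Icc 1 t, alphaWeight H i t * f i := by
  rw [Finset.sum_Icc_succ_top (by omega : 1 ≤ t+1)]
  have h1 : alphaWeight H (t+1) (t+1) = alphaStep H (t+1) := by
    unfold alphaWeight
    rw [Finset.Icc_eq_empty (by omega), Finset.prod_empty, mul_one]
  have h2 : ∀ i ∈ Finset.Icc 1 t,
      alphaWeight H i (t+1) * f i = (1 - alphaStep H (t+1)) * (alphaWeight H i t * f i) := by
    intro i hi
    simp only [Finset.mem_Icc] at hi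
    unfold alphaWeight
    rw [Finset.prod_Icc_succ_top (by omega : i + 1 ≤ t + 1)]
    ring
  rw [Finset.sum_congr rfl h2, ← Finset.mul_sum, h1]
  ring

lemma alphaStep_one (H : ℕ) : alphaStep H 1 = 1 := by
  unfold alphaStep
  rw [div_eq_one_iff_eq (by positivity)]
  push_cast; ring

lemma sum_weight_one (H t : ℕ) (ht : 1 ≤ t) :
    ∑ i ∈ Finset.Icc 1 t, alphaWeight H i t = 1 := by
  induction t with
  | zero => omega
  | succ n ih =>
    rcases Nat.eq_or_lt_of_le ht with h | h
    · simp [← h, alphaWeight, alphaStep_one]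
    · have hn : 1 ≤ n := by omega
      have := sum_weight_succ H n (fun _ => 1)
      simp only [mul_one] at this
      rw [this, ih hn]
      ring

lemma sqrt_key (t : ℕ) : 2 * Real.sqrt t * Real.sqrt ((t:ℝ)+1) ≤ 2 * t + 1 := by
  have h1 : Real.sqrt t * Real.sqrt ((t:ℝ)+1) = Real.sqrt (t * ((t:ℝ)+1)) := by
    rw [Real.sqrt_mul (by positivity)]
  have h2 : Real.sqrt ((t:ℝ) * ((t:ℝ)+1)) ≤ (t:ℝ) + 1/2 := by
    rw [show (t:ℝ) + 1/2 = Real.sqrt (((t:ℝ) + 1/2)^2) by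
      rw [Real.sqrt_sq (by positivity)]]
    apply Real.sqrt_le_sqrt
    nlinarith
  rw [mul_assoc, h1]
  linarith

lemma final_step (Hr n s s' : ℝ) (hH : 1 ≤ Hr) (hn : 1 ≤ n) (hs : 0 < s) (hs' : 0 < s')
    (hkey2 : 2*n*s' ≤ (2*n+1)*s) :
    (Hr+1)/(Hr+n+1) * (1/s') + (1 - (Hr+1)/(Hr+n+1)) * (2/s) ≤ 2/s' := by
  have hc : (0:ℝ) < Hr+n+1 := by linarith
  rw [← sub_nonneg]
  have : 2/s' - ((Hr+1)/(Hr+n+1) * (1/s') + (1 - (Hr+1)/(Hr+n+1)) * (2/s))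
      = (((Hr+2*n+1)*s - 2*n*s') ) / ((Hr+n+1)*s*s') := by
    field_simp
    ring
  rw [this]
  apply div_nonneg _ (by positivity)
  nlinarith [hkey2, mul_nonneg (by linarith : (0:ℝ) ≤ Hr) hs.le]

lemma upper_bound (H t : ℕ) (hH : 1 ≤ H) (ht : 1 ≤ t) :
    ∑ i ∈ Finset.Icc 1 t, alphaWeight H i t / Real.sqrt i ≤ 2 / Real.sqrt t := by
  induction t with
  | zero => omega
  | succ n ih =>
    have hdiv : ∀ (m : ℕ), (∑ i ∈ Finset.Icc 1 m, alphaWeight H i m / Real.sqrt i)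
        = ∑ i ∈ Finset.Icc 1 m, alphaWeight H i m * (1 / Real.sqrt i) := by
      intro m; apply Finset.sum_congr rfl; intro i _; rw [mul_one_div]
    rcases Nat.eq_or_lt_of_le ht with h | h
    · simp [← h, alphaWeight, alphaStep_one]
    · have hn : 1 ≤ n := by omega
      have hrec := sum_weight_succ H n (fun i => 1 / Real.sqrt i)
      rw [hdiv, hrec]
      have hIH := ih hn
      set s := Real.sqrt n with hs_def
      set s' := Real.sqrt ((n:ℝ)+1) with hs'_def
      have hcast : ((n+1 : ℕ) : ℝ) = (n:ℝ) + 1 := by push_cast; ring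
      rw [show Real.sqrt ((n+1:ℕ):ℝ) = s' by rw [hcast]]
      have hs : 0 < s := Real.sqrt_pos.mpr (by exact_mod_cast hn)
      have hs' : 0 < s' := Real.sqrt_pos.mpr (by positivity)
      have hss : s * s = n := Real.mul_self_sqrt (by positivity)
      have hss' : s' * s' = (n:ℝ) + 1 := Real.mul_self_sqrt (by positivity)
      have hkey : 2 * s * s' ≤ 2 * n + 1 := sqrt_key n
      have hkey2 : 2 * (n:ℝ) * s' ≤ (2 * n + 1) * s := by
        nlinarith [mul_pos hs hs', mul_nonneg (mul_nonneg (by positivity : (0:ℝ) ≤ 2*(n:ℝ)) hs'.le) hs.le,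
          mul_pos (mul_pos hs' hs') hs]
      have ha : alphaStep H (n+1) = ((H:ℝ) + 1) / ((H:ℝ) + n + 1) := by
        unfold alphaStep; push_cast; ring_nf
      have hS : ∑ i ∈ Finset.Icc 1 n, alphaWeight H i n * (1 / Real.sqrt i) ≤ 2 / s := by
        rw [← hdiv]; exact hIH
      have hSnn : 0 ≤ ∑ i ∈ Finset.Icc 1 n, alphaWeight H i n * (1 / Real.sqrt i) := by
        apply Finset.sum_nonneg
        intro i hi
        apply mul_nonneg (alphaWeight_nonneg H i n hH)
        positivity
      have ha1 : alphaStep H (n+1) ≤ 1 := alphaStep_le_one H (n+1) hH (by omega)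
      calc alphaStep H (n+1) * (1 / s') + (1 - alphaStep H (n+1)) *
              ∑ i ∈ Finset.Icc 1 n, alphaWeight H i n * (1 / Real.sqrt i)
          ≤ alphaStep H (n+1) * (1 / s') + (1 - alphaStep H (n+1)) * (2 / s) := by
            apply add_le_add le_rfl
            apply mul_le_mul_of_nonneg_left hS (by linarith)
        _ ≤ 2 / s' := by
            rw [ha]
            exact final_step H n s s' (by exact_mod_cast hH) (by exact_mod_cast hn) hs hs' hkey2

theorem stmt_13 (H t : ℕ) (hH : 1 ≤ H) (ht : 1 ≤ t) :
    1 / Real.sqrt t ≤ ∑ i ∈ Finset.Icc 1 t, alphaWeight H i t / Real.sqrt i ∧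
    ∑ i ∈ Finset.Icc 1 t, alphaWeight H i t / Real.sqrt i ≤ 2 / Real.sqrt t := by
  constructor
  · have h1 : ∀ i ∈ Finset.Icc 1 t, alphaWeight H i t / Real.sqrt t ≤ alphaWeight H i t / Real.sqrt i := by
      intro i hi
      simp only [Finset.mem_Icc] at hi
      apply div_le_div_of_nonneg_left (alphaWeight_nonneg H i t hH)
        (Real.sqrt_pos.mpr (by exact_mod_cast hi.1))
      apply Real.sqrt_le_sqrt
      exact_mod_cast hi.2
    calc 1 / Real.sqrt t = (∑ i ∈ Finset.Icc 1 t, alphaWeight H i t) / Real.sqrt t := by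
          rw [sum_weight_one H t ht]
      _ = ∑ i ∈ Finset.Icc 1 t, alphaWeight H i t / Real.sqrt t := by rw [Finset.sum_div]
      _ ≤ ∑ i ∈ Finset.Icc 1 t, alphaWeight H i t / Real.sqrt i := Finset.sum_le_sum h1
  · exact upper_bound H t hH ht
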